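/- arXiv:1303.1784 — 3 statements merged into one kernel-verified Lean document; each statement's English description precedes it below -/
import Mathlib

section
/- Let A and B be groups with non-trivial elements a ∈ A and b ∈ B such that a does not have order 2 or b does not have order 2. Then for any x ∈ A * B not lying in the cyclic subgroup ⟨ab⟩, one has ⟨ab⟩ ∩ x⟨ab⟩x⁻¹ = {e}. In particular ⟨ab⟩ is conjugate separated in A * B. -/
/-!
Write `g = ab`. In reduced words, every element is `g⁻ᵈ v` with `v` not beginning with a letter
of `B`, and also `u g⁻ᵈ` with `u` not ending with a letter of `A`; then `(ab)ᴷ v` and `u (ab)ᴺ`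
are again reduced words. Let `x gⁿ x⁻¹ = gᵐ` with `n > 0` (so `m ≠ 0`, as `g` has infinite order)
and write `x = u g⁻ᵈ`. For a large `k`, compare the reduced words of the two sides of
`u g^(kn) = g^(km) u`. If `m > 0`, then `u` is an initial segment of `abab⋯` not ending in `a`,
so `u = (ab)ˢ` and `x ∈ ⟨g⟩`. If `m < 0`, the letters `a, b` following `u` sit inside the
alternating word `b⁻¹a⁻¹b⁻¹a⁻¹⋯` of `g^(km)`, which forces `a = a⁻¹` and `b = b⁻¹`.
-/

open Monoid

/-- A subgroup `H` of a group `G` is conjugate separated if for every `x ∈ G \ H` the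
intersection `H ∩ xHx⁻¹` is finite. -/
def ConjugateSeparated {G : Type*} [Group G] (H : Subgroup G) : Prop :=
  ∀ x : G, x ∉ H → ((H ⊓ H.map (MulAut.conj x).toMonoidHom : Subgroup G) : Set G).Finite

namespace Monoid.CoprodI

variable {ι : Type*} {M : ι → Type*}

section alternatingList

variable (i j : ι) (a : M i) (b : M j)

def alternatingList (K : ℕ) : List (Σ k, M k) :=
  (List.range (2 * K)).map fun t => if Even t then ⟨i, a⟩ else ⟨j, b⟩

theorem getElem?_alternatingList (K t : ℕ) : (alternatingList i j a b K)[t]? =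
    if t < 2 * K then some (if Even t then ⟨i, a⟩ else ⟨j, b⟩) else none := by
  simp only [alternatingList, List.getElem?_map]
  split_ifs <;> simp_all

@[simp] theorem length_alternatingList (K : ℕ) : (alternatingList i j a b K).length = 2 * K := by
  simp [alternatingList]

variable {i j a b}

theorem exists_eq_alternatingList_of_append_eq {C B : List (Σ k, M k)} {N K : ℕ}
    (hlast : ∀ q ∈ C.getLast?, q.1 ≠ i) (hCK : C.length ≤ 2 * K)
    (h : C ++ alternatingList i j a b N = alternatingList i j a b K ++ B) :
    ∃ s, C = alternatingList i j a b s := by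
  have hC : ∀ t < C.length, C[t]? = (alternatingList i j a b K)[t]? := fun t ht => by
    rw [← List.getElem?_append_left ht, h, List.getElem?_append_left (by simp; omega)]
  obtain ⟨s, hs | hs⟩ := Nat.even_or_odd' C.length
  · refine ⟨s, List.ext_getElem? fun t => ?_⟩
    by_cases ht : t < C.length
    · rw [hC t ht, getElem?_alternatingList, getElem?_alternatingList,
        if_pos (by omega : t < 2 * K), if_pos (by omega : t < 2 * s)]
    · rw [List.getElem?_eq_none (by omega), List.getElem?_eq_none (by simp; omega)]
  · have hq := hC (2 * s) (by omega)
    rw [getElem?_alternatingList, if_pos (by omega), if_pos (even_two_mul s)] at hq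
    exact absurd rfl (hlast _ (by rw [List.getLast?_eq_getElem?, hs]; simpa using hq))

theorem eq_and_eq_of_append_alternatingList_eq (hij : i ≠ j) {a' : M i} {b' : M j}
    {C B : List (Σ k, M k)} {N K : ℕ} (hN : 0 < N) (hCK : C.length + 2 ≤ 2 * K)
    (h : C ++ alternatingList i j a b N = alternatingList j i b' a' K ++ B) :
    a = a' ∧ b = b' := by
  have key (t : ℕ) (ht : t < 2) :
      (alternatingList i j a b N)[t]? = (alternatingList j i b' a' K)[C.length + t]? := by
    rw [← List.getElem?_append_left (l₁ := alternatingList j i b' a' K) (l₂ := B)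
      (by simp; omega), ← h, List.getElem?_append_right (by omega), Nat.add_sub_cancel_left]
  have h0 := key 0 (by norm_num)
  have h1 := key 1 (by norm_num)
  simp only [getElem?_alternatingList, if_pos (show 0 < 2 * N by omega),
    if_pos (show 1 < 2 * N by omega), if_pos (show C.length + 0 < 2 * K by omega),
    if_pos (show C.length + 1 < 2 * K by omega)] at h0 h1
  rcases Nat.even_or_odd C.length with hC | hC
  · simp [hC, hij] at h0
  · simp_all [Nat.even_add_one, ← Nat.not_even_iff_odd]

end alternatingList

section Monoid

variable [∀ i, Monoid (M i)]

def IsReduced (l : List (Σ i, M i)) : Prop :=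
  (∀ p ∈ l, p.2 ≠ 1) ∧ l.IsChain fun p q => p.1 ≠ q.1

def listProd (l : List (Σ i, M i)) : CoprodI M :=
  (l.map fun p => of p.2).prod

@[simp] theorem listProd_nil : listProd ([] : List (Σ i, M i)) = 1 := rfl

@[simp] theorem listProd_cons (p : Σ i, M i) (l : List (Σ i, M i)) :
    listProd (p :: l) = of p.2 * listProd l := List.prod_cons

@[simp] theorem listProd_append (l₁ l₂ : List (Σ i, M i)) :
    listProd (l₁ ++ l₂) = listProd l₁ * listProd l₂ := by
  simp [listProd]

theorem isReduced_cons {p : Σ i, M i} {l : List (Σ i, M i)} :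
    IsReduced (p :: l) ↔ p.2 ≠ 1 ∧ (∀ q ∈ l.head?, p.1 ≠ q.1) ∧ IsReduced l := by
  simp only [IsReduced, List.mem_cons, forall_eq_or_imp, List.isChain_cons]
  tauto

theorem isReduced_append {l₁ l₂ : List (Σ i, M i)} :
    IsReduced (l₁ ++ l₂) ↔ IsReduced l₁ ∧ IsReduced l₂ ∧
      ∀ p ∈ l₁.getLast?, ∀ q ∈ l₂.head?, p.1 ≠ q.1 := by
  simp only [IsReduced, List.mem_append, List.isChain_append]
  constructor
  · rintro ⟨hne, h₁, h₂, h⟩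
    exact ⟨⟨fun p hp => hne p (.inl hp), h₁⟩, ⟨fun p hp => hne p (.inr hp), h₂⟩, h⟩
  · rintro ⟨⟨hne₁, h₁⟩, ⟨hne₂, h₂⟩, h⟩
    exact ⟨fun p hp => hp.elim (hne₁ p) (hne₂ p), h₁, h₂, h⟩

theorem IsReduced.eq_of_listProd_eq {l₁ l₂ : List (Σ i, M i)} (h₁ : IsReduced l₁)
    (h₂ : IsReduced l₂) (h : listProd l₁ = listProd l₂) : l₁ = l₂ := by
  classical
  exact congrArg Word.toList <|
    (Word.equiv (M := M)).symm.injective (a₁ := ⟨l₁, h₁.1, h₁.2⟩) (a₂ := ⟨l₂, h₂.1, h₂.2⟩)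
      h

theorem exists_isReduced_listProd_eq (x : CoprodI M) : ∃ l, IsReduced l ∧ listProd l = x := by
  classical
  exact ⟨(Word.equiv x).toList, ⟨(Word.equiv x).ne_one, (Word.equiv x).chain_ne⟩,
    Word.equiv.symm_apply_apply x⟩

theorem IsReduced.exists_listProd_eq_of_mul {k : ι} {c : M k} (hc : c ≠ 1)
    {z : List (Σ i, M i)} (hz : IsReduced z) :
    ∃ z', IsReduced z' ∧ listProd z' = of c * listProd z ∧
      ((∀ q ∈ z'.head?, q.1 = k) ∨ z'.length < z.length) := by
  rcases z with _ | ⟨⟨k', d⟩, t⟩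
  · exact ⟨[⟨k, c⟩], isReduced_cons.2 ⟨hc, by simp, hz⟩, by simp, .inl (by simp)⟩
  obtain ⟨-, ht_head, ht⟩ := isReduced_cons.1 hz
  by_cases hk : k' = k
  · subst hk
    by_cases hcd : c * d = 1
    · exact ⟨t, ht, by simp [← mul_assoc, ← map_mul, hcd], .inr (by simp)⟩
    · exact ⟨⟨k', c * d⟩ :: t, isReduced_cons.2 ⟨hcd, ht_head, ht⟩, by simp [mul_assoc],
        .inl (by simp)⟩
  · exact ⟨⟨k, c⟩ :: ⟨k', d⟩ :: t, isReduced_cons.2 ⟨hc, by simpa using Ne.symm hk, hz⟩,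
      by simp, .inl (by simp)⟩

variable {i j : ι} {a : M i} {b : M j}

@[simp] theorem listProd_alternatingList (K : ℕ) :
    listProd (alternatingList i j a b K) = (of a * of b) ^ K := by
  induction K with
  | zero => simp [alternatingList]
  | succ K ih =>
    rw [alternatingList, show 2 * (K + 1) = 2 * K + 1 + 1 by ring, List.range_succ, List.range_succ]
    simp only [List.map_append, listProd_append]
    rw [← alternatingList, ih]
    simp [pow_succ, parity_simps, mul_assoc]

theorem isReduced_alternatingList (hij : i ≠ j) (ha : a ≠ 1) (hb : b ≠ 1) (K : ℕ) :
    IsReduced (alternatingList i j a b K) := by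
  refine ⟨?_, ?_⟩
  · simp only [alternatingList, List.mem_map]
    rintro p ⟨t, -, hp⟩
    split_ifs at hp <;> subst hp <;> assumption
  · rw [alternatingList, List.isChain_map, List.isChain_range]
    intro t _
    by_cases ht : Even t <;> simp [ht, Nat.even_add_one, hij, hij.symm]

theorem isReduced_alternatingList_append (hij : i ≠ j) (ha : a ≠ 1) (hb : b ≠ 1) (K : ℕ)
    {B : List (Σ k, M k)} (hB : IsReduced B) (hhead : ∀ q ∈ B.head?, q.1 ≠ j) :
    IsReduced (alternatingList i j a b K ++ B) := by
  refine isReduced_append.2 ⟨isReduced_alternatingList hij ha hb K, hB, fun p hp q hq => ?_⟩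
  simp only [List.getLast?_eq_getElem?, length_alternatingList, getElem?_alternatingList] at hp
  split_ifs at hp with hK hodd
  · exact absurd hodd (Nat.not_even_iff_odd.2 ⟨K - 1, by omega⟩)
  · simp only [Option.mem_some_iff] at hp
    subst hp
    exact (hhead q hq).symm
  · simp at hp

theorem isReduced_append_alternatingList (hij : i ≠ j) (ha : a ≠ 1) (hb : b ≠ 1) (N : ℕ)
    {C : List (Σ k, M k)} (hC : IsReduced C) (hlast : ∀ q ∈ C.getLast?, q.1 ≠ i) :
    IsReduced (C ++ alternatingList i j a b N) := by
  refine isReduced_append.2 ⟨hC, isReduced_alternatingList hij ha hb N, fun p hp q hq => ?_⟩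
  simp only [List.head?_eq_getElem?, getElem?_alternatingList, Even.zero, if_true] at hq
  split_ifs at hq
  · simp only [Option.mem_some_iff] at hq
    subst hq
    exact hlast p hp
  · simp at hq

theorem not_isOfFinOrder_of_mul_of (hij : i ≠ j) (ha : a ≠ 1) (hb : b ≠ 1) :
    ¬ IsOfFinOrder (of a * of b) := by
  rw [isOfFinOrder_iff_pow_eq_one]
  rintro ⟨K, hK, hK1⟩
  have := (isReduced_alternatingList hij ha hb K).eq_of_listProd_eq (l₂ := []) ⟨by simp, .nil⟩
    (by rw [listProd_alternatingList, hK1, listProd_nil])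
  simpa [hK.ne'] using congrArg List.length this

theorem IsReduced.exists_pow_mul_eq_listProd (hij : i ≠ j) (ha : a ≠ 1) (hb : b ≠ 1)
    {w : List (Σ k, M k)} (hw : IsReduced w) : ∃ (d : ℕ) (B : List (Σ k, M k)),
      IsReduced B ∧ (∀ q ∈ B.head?, q.1 ≠ j) ∧
        (of a * of b) ^ d * listProd w = listProd B := by
  by_cases hw_head : ∀ q ∈ w.head?, q.1 ≠ j
  · exact ⟨0, w, hw, hw_head, one_mul _⟩
  match w, hw, hw_head with
  | [], _, hw_head => simp at hw_head
  | ⟨k, d⟩ :: t, hw, hw_head =>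
    obtain rfl : j = k := by simpa [eq_comm] using hw_head
    obtain ⟨-, ht_head, ht⟩ := isReduced_cons.1 hw
    have hgw : of a * of b * listProd (⟨j, d⟩ :: t) = of a * (of (b * d) * listProd t) := by
      simp [mul_assoc]
    -- If `b` cancels `d`, the letter `a` either starts the new word or shortens `t`.
    by_cases hbd : b * d = 1
    · rw [hbd, map_one, one_mul] at hgw
      obtain ⟨z, hz, hz_prod, hz_head | hz_length⟩ := ht.exists_listProd_eq_of_mul ha
      · exact ⟨1, z, hz, fun q hq => (hz_head q hq).symm ▸ hij,
          by rw [pow_one, hgw, hz_prod]⟩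
      · obtain ⟨e, B, hB, hB_head, heB⟩ := hz.exists_pow_mul_eq_listProd hij ha hb
        exact ⟨e + 1, B, hB, hB_head, by rw [pow_succ, mul_assoc, hgw, ← hz_prod, heB]⟩
    · refine ⟨1, ⟨i, a⟩ :: ⟨j, b * d⟩ :: t, ?_, by simpa using hij,
        by rw [pow_one, hgw]; simp only [listProd_cons]⟩
      exact isReduced_cons.2 ⟨ha, by simpa using hij, isReduced_cons.2 ⟨hbd, ht_head, ht⟩⟩
termination_by w.length
decreasing_by simp only [List.length_cons]; omega

theorem exists_append_alternatingList_eq_of_semiconjBy (hij : i ≠ j) (ha : a ≠ 1) (hb : b ≠ 1)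
    {i' j' : ι} {a' : M i'} {b' : M j'} (hij' : i' ≠ j') (ha' : a' ≠ 1) (hb' : b' ≠ 1)
    {C : List (Σ k, M k)} (hC : IsReduced C) (hlast : ∀ q ∈ C.getLast?, q.1 ≠ i) {n m : ℕ}
    (h : SemiconjBy (listProd C) ((of a * of b) ^ n) ((of a' * of b') ^ m)) :
    ∃ (d : ℕ) (B : List (Σ k, M k)), ∀ k, d ≤ m * k →
      C ++ alternatingList i j a b (n * k) = alternatingList i' j' a' b' (m * k - d) ++ B := by
  obtain ⟨d, B, hB, hB_head, hdB⟩ := hC.exists_pow_mul_eq_listProd hij' ha' hb'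
  refine ⟨d, B, fun k hk => ?_⟩
  refine (isReduced_append_alternatingList hij ha hb _ hC hlast).eq_of_listProd_eq
    (isReduced_alternatingList_append hij' ha' hb' _ hB hB_head) ?_
  rw [listProd_append, listProd_append, listProd_alternatingList, listProd_alternatingList,
    pow_mul, (h.pow_right k).eq, ← pow_mul, ← hdB, ← mul_assoc, ← pow_add,
    Nat.sub_add_cancel hk]

theorem eq_and_eq_of_semiconjBy (hij : i ≠ j) (ha : a ≠ 1) (hb : b ≠ 1) {a' : M i} {b' : M j}
    (ha' : a' ≠ 1) (hb' : b' ≠ 1) {C : List (Σ k, M k)} (hC : IsReduced C)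
    (hlast : ∀ q ∈ C.getLast?, q.1 ≠ i) {n m : ℕ} (hn : 0 < n) (hm : 0 < m)
    (h : SemiconjBy (listProd C) ((of a * of b) ^ n) ((of b' * of a') ^ m)) :
    a = a' ∧ b = b' := by
  obtain ⟨d, B, hCB⟩ :=
    exists_append_alternatingList_eq_of_semiconjBy hij ha hb hij.symm hb' ha' hC hlast h
  have hk : d + C.length + 1 ≤ m * (d + C.length + 1) := Nat.le_mul_of_pos_left _ hm
  exact eq_and_eq_of_append_alternatingList_eq hij (Nat.mul_pos hn (by omega)) (by omega)
    (hCB (d + C.length + 1) (by omega))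

end Monoid

section Group

variable [∀ i, Group (M i)]

def listInv (l : List (Σ i, M i)) : List (Σ i, M i) :=
  (l.map fun p => ⟨p.1, p.2⁻¹⟩).reverse

@[simp] theorem listProd_listInv (l : List (Σ i, M i)) :
    listProd (listInv l) = (listProd l)⁻¹ := by
  induction l with
  | nil => simp [listInv]
  | cons p l ih => simp_all [listInv]

theorem IsReduced.listInv {l : List (Σ i, M i)} (hl : IsReduced l) : IsReduced (listInv l) := by
  refine ⟨?_, ?_⟩
  · simp only [CoprodI.listInv, List.mem_reverse, List.mem_map]
    rintro _ ⟨p, hp, rfl⟩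
    simpa using hl.1 p hp
  · simpa [CoprodI.listInv, List.isChain_reverse, List.isChain_map, ne_comm] using hl.2

theorem getLast?_listInv (l : List (Σ i, M i)) :
    (listInv l).getLast? = l.head?.map fun p => ⟨p.1, p.2⁻¹⟩ := by
  simp [listInv, List.head?_map]

variable {i j : ι} {a : M i} {b : M j}

theorem exists_mul_pow_eq_listProd (hij : i ≠ j) (ha : a ≠ 1) (hb : b ≠ 1) (y : CoprodI M) :
    ∃ (d : ℕ) (C : List (Σ k, M k)), IsReduced C ∧ (∀ q ∈ C.getLast?, q.1 ≠ i) ∧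
      y * (of a * of b) ^ d = listProd C := by
  obtain ⟨w, hw, hwy⟩ := exists_isReduced_listProd_eq y⁻¹
  obtain ⟨d, B, hB, hB_head, hdB⟩ :=
    hw.exists_pow_mul_eq_listProd hij.symm (inv_ne_one.2 hb) (inv_ne_one.2 ha)
  refine ⟨d, listInv B, hB.listInv, fun q hq => ?_, ?_⟩
  · rw [getLast?_listInv] at hq
    obtain ⟨p, hp, rfl⟩ := Option.mem_map.1 hq
    exact hB_head p hp
  · rw [listProd_listInv, ← hdB, hwy, mul_inv_rev, inv_inv, ← inv_pow, mul_inv_rev,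
      ← map_inv, ← map_inv, inv_inv, inv_inv]

theorem mem_zpowers_of_semiconjBy (hij : i ≠ j) (ha : a ≠ 1) (hb : b ≠ 1)
    {C : List (Σ k, M k)} (hC : IsReduced C) (hlast : ∀ q ∈ C.getLast?, q.1 ≠ i) {n m : ℕ}
    (hm : 0 < m) (h : SemiconjBy (listProd C) ((of a * of b) ^ n) ((of a * of b) ^ m)) :
    listProd C ∈ Subgroup.zpowers (of a * of b) := by
  obtain ⟨d, B, hCB⟩ :=
    exists_append_alternatingList_eq_of_semiconjBy hij ha hb hij ha hb hC hlast h
  have hk : d + C.length ≤ m * (d + C.length) := Nat.le_mul_of_pos_left _ hm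
  obtain ⟨s, rfl⟩ :=
    exists_eq_alternatingList_of_append_eq hlast (by omega) (hCB (d + C.length) (by omega))
  rw [listProd_alternatingList]
  exact Subgroup.npow_mem_zpowers _ s

theorem mem_zpowers_of_mul_zpow_mul_inv_eq (hij : i ≠ j) (ha : a ≠ 1) (hb : b ≠ 1)
    (h2 : orderOf a ≠ 2 ∨ orderOf b ≠ 2) {x : CoprodI M} {n m : ℤ} (hn : n ≠ 0)
    (h : x * (of a * of b) ^ n * x⁻¹ = (of a * of b) ^ m) :
    x ∈ Subgroup.zpowers (of a * of b) := by
  wlog hn_pos : 0 < n generalizing n m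
  · exact this (m := -m) (neg_ne_zero.2 hn) (by rw [zpow_neg, zpow_neg, ← h]; group) (by omega)
  have hm : m ≠ 0 := by
    rintro rfl
    refine hn (injective_zpow_iff_not_isOfFinOrder.2 (not_isOfFinOrder_of_mul_of hij ha hb) ?_)
    simpa [mul_inv_eq_one] using h
  obtain ⟨d, C, hC, hlast, hxC⟩ := exists_mul_pow_eq_listProd hij ha hb x
  have hsemi : SemiconjBy (listProd C) ((of a * of b) ^ n) ((of a * of b) ^ m) := by
    rw [← hxC]
    exact SemiconjBy.mul_left (mul_inv_eq_iff_eq_mul.1 h)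
      (((Commute.refl _).pow_left d).zpow_right n)
  suffices listProd C ∈ Subgroup.zpowers (of a * of b) by
    rw [← mul_inv_cancel_right x ((of a * of b) ^ d), hxC]
    exact mul_mem this (inv_mem (Subgroup.npow_mem_zpowers _ d))
  lift n to ℕ using hn_pos.le
  obtain ⟨m, rfl | rfl⟩ := Int.eq_nat_or_neg m
  · rw [zpow_natCast, zpow_natCast] at hsemi
    exact mem_zpowers_of_semiconjBy hij ha hb hC hlast (by omega) hsemi
  · rw [zpow_natCast, zpow_neg, zpow_natCast, ← inv_pow, mul_inv_rev, ← map_inv, ← map_inv]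
      at hsemi
    obtain ⟨haa, hbb⟩ := eq_and_eq_of_semiconjBy hij ha hb (inv_ne_one.2 ha) (inv_ne_one.2 hb)
      hC hlast (by omega) (by omega) hsemi
    have order_two {k : ι} {c : M k} (hc : c ≠ 1) (hcc : c = c⁻¹) : orderOf c = 2 :=
      orderOf_eq_prime (by rw [sq]; nth_rw 2 [hcc]; exact mul_inv_cancel c) hc
    exact (h2.elim (· (order_two ha haa)) (· (order_two hb hbb))).elim

end Group

end Monoid.CoprodI

universe u v

/-- Normal forms are available for the indexed free product `CoprodI`, so `A ∗ B` is embedded into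
the free product of this `Bool`-indexed family, lifted to a common universe. -/
def boolFamily (A : Type u) (B : Type v) : Bool → Type (max u v)
  | true => ULift.{v} A
  | false => ULift.{u} B

instance (A : Type u) (B : Type v) [Group A] [Group B] : ∀ t, Group (boolFamily A B t)
  | true => inferInstanceAs (Group (ULift.{v} A))
  | false => inferInstanceAs (Group (ULift.{u} B))

section

variable (A : Type u) (B : Type v) [Group A] [Group B]

def coprodToCoprodI : Coprod A B →* CoprodI (boolFamily A B) :=
  Coprod.lift ((CoprodI.of (i := true)).comp MulEquiv.ulift.symm.toMonoidHom)
    ((CoprodI.of (i := false)).comp MulEquiv.ulift.symm.toMonoidHom)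

theorem coprodToCoprodI_injective : Function.Injective (coprodToCoprodI A B) := by
  let ψ : CoprodI (boolFamily A B) →* Coprod A B := CoprodI.lift fun
    | true => Coprod.inl.comp MulEquiv.ulift.toMonoidHom
    | false => Coprod.inr.comp MulEquiv.ulift.toMonoidHom
  have hψ : ψ.comp (coprodToCoprodI A B) = MonoidHom.id _ :=
    Coprod.hom_ext (MonoidHom.ext fun _ => rfl) (MonoidHom.ext fun _ => rfl)
  exact Function.LeftInverse.injective (g := ψ) (DFunLike.congr_fun hψ)

theorem coprodToCoprodI_inl_mul_inr (a : A) (b : B) :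
    coprodToCoprodI A B (Coprod.inl a * Coprod.inr b) =
      CoprodI.of (M := boolFamily A B) (i := true) ⟨a⟩ * CoprodI.of (i := false) ⟨b⟩ :=
  rfl

end

theorem Monoid.Coprod.mem_zpowers_of_mul_zpow_mul_inv_eq {A : Type u} {B : Type v}
    [Group A] [Group B] {a : A} {b : B} (ha : a ≠ 1) (hb : b ≠ 1)
    (h2 : orderOf a ≠ 2 ∨ orderOf b ≠ 2) {x : Coprod A B} {n m : ℤ} (hn : n ≠ 0)
    (h : x * (inl a * inr b) ^ n * x⁻¹ = (inl a * inr b) ^ m) :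
    x ∈ Subgroup.zpowers (inl a * inr b) := by
  rw [← Subgroup.mem_map_iff_mem (coprodToCoprodI_injective A B), MonoidHom.map_zpowers,
    coprodToCoprodI_inl_mul_inr]
  refine CoprodI.mem_zpowers_of_mul_zpow_mul_inv_eq (M := boolFamily A B) (i := true)
    (j := false) (a := ⟨a⟩) (b := ⟨b⟩) (by decide) (fun h => ha (congrArg ULift.down h))
    (fun h => hb (congrArg ULift.down h)) ?_ hn (m := m) ?_
  · convert h2 using 2
    · exact (MulEquiv.ulift.symm : A ≃* ULift.{v} A).orderOf_eq a
    · exact (MulEquiv.ulift.symm : B ≃* ULift.{u} B).orderOf_eq b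
  · rw [← coprodToCoprodI_inl_mul_inr]
    simpa only [map_mul, map_inv, map_zpow] using congrArg (coprodToCoprodI A B) h

/-- Let `A`, `B` be groups with non-trivial elements `a ∈ A`, `b ∈ B` such that `a` does not
have order 2 or `b` does not have order 2.  Then for any `x` in the free product `A ∗ B` not
lying in `⟨ab⟩`, one has `⟨ab⟩ ∩ x⟨ab⟩x⁻¹ = {e}`; in particular `⟨ab⟩` is conjugate
separated in `A ∗ B`. -/
theorem zpowers_ab_conjugate_separated
    (A B : Type*) [Group A] [Group B] (a : A) (b : B) (ha : a ≠ 1) (hb : b ≠ 1)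
    (h2 : orderOf a ≠ 2 ∨ orderOf b ≠ 2) :
    (∀ x : Coprod A B,
        x ∉ Subgroup.zpowers (Coprod.inl a * Coprod.inr b) →
        Subgroup.zpowers (Coprod.inl a * Coprod.inr b) ⊓
            (Subgroup.zpowers (Coprod.inl a * Coprod.inr b)).map
              (MulAut.conj x).toMonoidHom = ⊥) ∧
    ConjugateSeparated (Subgroup.zpowers (Coprod.inl a * Coprod.inr b)) := by
  set w := Coprod.inl a * Coprod.inr b
  have key (x : Coprod A B) (hx : x ∉ Subgroup.zpowers w) :
      Subgroup.zpowers w ⊓ (Subgroup.zpowers w).map (MulAut.conj x).toMonoidHom = ⊥ := by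
    rw [eq_bot_iff]
    rintro _ ⟨⟨m, rfl⟩, z, ⟨n, rfl⟩, hwn⟩
    simp only [MulEquiv.toMonoidHom_eq_coe, MonoidHom.coe_coe, MulAut.conj_apply] at hwn
    rcases eq_or_ne n 0 with rfl | hn
    · simp [← hwn]
    exact absurd (Coprod.mem_zpowers_of_mul_zpow_mul_inv_eq ha hb h2 hn hwn) hx
  exact ⟨key, fun x hx => by rw [key x hx]; exact Set.finite_singleton 1⟩
end

section
/- For any group G and any i, j > 0, the quotient (G/Tor_i(G))/Tor_j(G/Tor_i(G)) is isomorphic to G/Tor_{i+j}(G), via the map sending (g·Tor_i(G))·Tor_j(G/Tor_i(G)) to g·Tor_{i+j}(G). -/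
/-- Auxiliary: the iterated torsion subgroups bundled with proofs of normality. -/
def torIterAux (G : Type*) [Group G] : ℕ → {N : Subgroup G // N.Normal}
  | 0 => ⟨⊥, inferInstance⟩
  | (i + 1) =>
    let p := torIterAux G i
    haveI := p.2
    ⟨(Subgroup.normalClosure {x : G ⧸ p.1 | IsOfFinOrder x}).comap (QuotientGroup.mk' p.1),
      Subgroup.Normal.comap Subgroup.normalClosure_normal _⟩

/-- `torIter G i` is `Tor_i(G)`: `Tor_0(G) = {e}` and `Tor_{i+1}(G)` is the preimage in `G`
of the normal closure of the set of torsion elements of `G / Tor_i(G)`. -/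
def torIter (G : Type*) [Group G] (i : ℕ) : Subgroup G := (torIterAux G i).1

instance torIter_normal (G : Type*) [Group G] (i : ℕ) : (torIter G i).Normal :=
  (torIterAux G i).2

theorem torIter_succ (G : Type*) [Group G] (i : ℕ) :
    torIter G (i + 1) =
      (Subgroup.normalClosure {x : G ⧸ torIter G i | IsOfFinOrder x}).comap
        (QuotientGroup.mk' (torIter G i)) := rfl

theorem torIter_mono (G : Type*) [Group G] : Monotone (torIter G) := by
  apply monotone_nat_of_le_succ
  intro i
  rw [torIter_succ]
  calc torIter G i = (QuotientGroup.mk' (torIter G i)).ker := (QuotientGroup.ker_mk' _).symm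
    _ ≤ _ := Subgroup.ker_le_comap _ _

/-- `Tor_∞(G)`, the union of all the `Tor_i(G)`. -/
def torInf (G : Type*) [Group G] : Subgroup G := ⨆ i, torIter G i

instance torInf_normal (G : Type*) [Group G] : (torInf G).Normal := by
  constructor
  intro n hn g
  rw [torInf, Subgroup.mem_iSup_of_directed ((torIter_mono G).directed_le)] at hn
  obtain ⟨i, hi⟩ := hn
  exact le_iSup (torIter G) i ((torIter_normal G i).conj_mem n hi g)

/-- The torsion length of `G`: the smallest `n` with `Tor_n(G) = Tor_∞(G)`, or `∞`. -/
noncomputable def torLen (G : Type*) [Group G] : ℕ∞ :=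
  sInf ((↑) '' {n : ℕ | torIter G n = torInf G})

/-- Auxiliary: build the isomorphism from a computed kernel. -/
theorem quotient_quotient_iso_of_ker {G : Type*} [Group G] {N : Subgroup G} [N.Normal]
    (S : Subgroup (G ⧸ N)) [S.Normal] (T : Subgroup G) [T.Normal]
    (hker : ((QuotientGroup.mk' S).comp (QuotientGroup.mk' N)).ker = T) :
    ∃ e : (G ⧸ N) ⧸ S ≃* G ⧸ T,
      ∀ g : G, e (QuotientGroup.mk (QuotientGroup.mk g)) = QuotientGroup.mk g := by
  set f := (QuotientGroup.mk' S).comp (QuotientGroup.mk' N) with hf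
  have hsurj : Function.Surjective f :=
    (QuotientGroup.mk'_surjective S).comp (QuotientGroup.mk'_surjective N)
  let q := QuotientGroup.quotientKerEquivOfSurjective f hsurj
  refine ⟨q.symm.trans (QuotientGroup.quotientMulEquivOfEq hker), fun g => ?_⟩
  have h1 : q.symm (QuotientGroup.mk (QuotientGroup.mk g)) = QuotientGroup.mk g := by
    rw [MulEquiv.symm_apply_eq]; rfl
  simp only [MulEquiv.trans_apply, h1, QuotientGroup.quotientMulEquivOfEq_mk]

theorem torIter_quotient_aux (G : Type*) [Group G] (i j : ℕ) :
    ∃ e : (G ⧸ torIter G i) ⧸ torIter (G ⧸ torIter G i) j ≃* G ⧸ torIter G (i + j),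
      ∀ g : G,
        e (QuotientGroup.mk (QuotientGroup.mk g)) = QuotientGroup.mk g := by
  induction j with
  | zero =>
    refine quotient_quotient_iso_of_ker _ _ ?_
    rw [← MonoidHom.comap_ker, QuotientGroup.ker_mk']
    show (⊥ : Subgroup (G ⧸ torIter G i)).comap _ = torIter G i
    rw [MonoidHom.comap_bot, QuotientGroup.ker_mk']
  | succ j ih =>
    obtain ⟨e, he⟩ := ih
    refine quotient_quotient_iso_of_ker _ _ ?_
    rw [← MonoidHom.comap_ker, QuotientGroup.ker_mk', torIter_succ, Subgroup.comap_comap]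
    have hψ : e.toMonoidHom.comp
        ((QuotientGroup.mk' (torIter (G ⧸ torIter G i) j)).comp
          (QuotientGroup.mk' (torIter G i))) = QuotientGroup.mk' (torIter G (i + j)) := by
      ext g
      exact he g
    have himg : (⇑e.toMonoidHom) '' {x : (G ⧸ torIter G i) ⧸ torIter (G ⧸ torIter G i) j | IsOfFinOrder x}
        = {x : G ⧸ torIter G (i + j) | IsOfFinOrder x} := by
      ext y
      constructor
      · rintro ⟨x, hx, rfl⟩
        exact e.toMonoidHom.isOfFinOrder hx
      · intro hy
        exact ⟨e.symm y, e.symm.toMonoidHom.isOfFinOrder hy, e.apply_symm_apply y⟩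
    have h2 : Subgroup.normalClosure
          {x : (G ⧸ torIter G i) ⧸ torIter (G ⧸ torIter G i) j | IsOfFinOrder x}
        = Subgroup.comap e.toMonoidHom
            (Subgroup.normalClosure {x : G ⧸ torIter G (i + j) | IsOfFinOrder x}) := by
      rw [← himg, ← Subgroup.map_normalClosure _ e.toMonoidHom e.surjective,
        Subgroup.comap_map_eq_self_of_injective e.injective]
    rw [h2, Subgroup.comap_comap, hψ]
    exact (torIter_succ G (i + j)).symm

/-- For any group `G` and `i, j > 0`, the quotient `(G/Tor_i(G))/Tor_j(G/Tor_i(G))` is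
isomorphic to `G/Tor_{i+j}(G)`, via the map sending the class of the class of `g` to the
class of `g`. -/
theorem quotient_torIter_quotient_iso (G : Type*) [Group G] (i j : ℕ)
    (hi : 0 < i) (hj : 0 < j) :
    ∃ e : (G ⧸ torIter G i) ⧸ torIter (G ⧸ torIter G i) j ≃* G ⧸ torIter G (i + j),
      ∀ g : G,
        e (QuotientGroup.mk (QuotientGroup.mk g)) = QuotientGroup.mk g :=
  torIter_quotient_aux G i j
end

section
/- Every torsion element of a free product *_{i∈I} A_i of a family of groups is conjugate to an element of one of the factors A_i. -/
open Monoid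

/-!
Write a torsion element `g` as a reduced word. If its first and last letters lie in different
factors, all positive powers of `g` are again nonempty reduced words, hence `≠ 1`, so `g` has
infinite order. Otherwise the word is `a u b` with `a, b ∈ A_i`; conjugating by `a` gives
`u (b a)`, a reduced word that is strictly shorter, so induction on the length finishes the
proof, the base cases being words of length at most one.
-/

namespace Monoid.CoprodI

variable {ι : Type*}

section Monoid

variable {M : ι → Type*} [∀ i, Monoid (M i)]

theorem NeWord.prod_ne_one {i j : ι} (w : NeWord M i j) : w.prod ≠ 1 := by
  classical
  intro h
  have hw : w.toWord = Word.empty := Word.equiv.symm.injective (h.trans Word.prod_empty.symm)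
  exact w.toList_ne_nil (congrArg Word.toList hw)

theorem NeWord.exists_prod_eq_pow_succ {i j : ι} (hij : i ≠ j) (w : NeWord M i j) (n : ℕ) :
    ∃ w' : NeWord M i j, w'.prod = w.prod ^ (n + 1) := by
  induction n with
  | zero => exact ⟨w, by simp⟩
  | succ n ih =>
    obtain ⟨w', hw'⟩ := ih
    exact ⟨w'.append hij.symm w, by rw [NeWord.append_prod, hw', ← pow_succ]⟩

theorem NeWord.not_isOfFinOrder_prod {i j : ι} (hij : i ≠ j) (w : NeWord M i j) :
    ¬IsOfFinOrder w.prod := by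
  intro hw
  obtain ⟨n, hn, hpow⟩ := hw.exists_pow_eq_one
  obtain ⟨w', hw'⟩ := w.exists_prod_eq_pow_succ hij (n - 1)
  exact w'.prod_ne_one (by rw [hw', Nat.sub_add_cancel hn, hpow])

theorem Word.not_isOfFinOrder_prod_of_head_fst_ne_getLast_fst (w : Word M)
    (hw : w.toList.head?.map Sigma.fst ≠ w.toList.getLast?.map Sigma.fst) :
    ¬IsOfFinOrder w.prod := by
  have hne : w ≠ Word.empty := by
    rintro rfl
    exact hw rfl
  obtain ⟨i, j, w', rfl⟩ := NeWord.of_word w hne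
  have hij : i ≠ j := by
    simpa [NeWord.toWord, NeWord.toList_head?, NeWord.toList_getLast?] using hw
  exact w'.not_isOfFinOrder_prod hij

end Monoid

section Group

variable {G : ι → Type*} [∀ i, Group (G i)]

theorem Word.exists_length_lt_prod_eq_conj (w : Word G) {i : ι} (a b : G i)
    (m : List (Σ i, G i)) (hw : w.toList = ⟨i, a⟩ :: (m ++ [⟨i, b⟩])) :
    ∃ w' : Word G,
      w'.toList.length < w.toList.length ∧ w'.prod = (of a)⁻¹ * w.prod * of a := by
  have hm_ne_one : ∀ l ∈ m, l.snd ≠ 1 := fun l hl => w.ne_one l (by simp [hw, hl])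
  have hchain : (m ++ [⟨i, b⟩] : List (Σ i, G i)).IsChain
      fun l l' => Sigma.fst l ≠ Sigma.fst l' := by
    simpa [hw] using w.chain_ne.tail
  have hprod : (of a)⁻¹ * w.prod * of a = (m.map fun l => of l.snd).prod * of (b * a) := by
    simp [Word.prod, hw, mul_assoc]
  by_cases hba : b * a = 1
  · refine ⟨⟨m, hm_ne_one, hchain.left_of_append⟩, by simp [hw], ?_⟩
    rw [hprod, hba, map_one, mul_one]
    rfl
  · refine ⟨⟨m ++ [⟨i, b * a⟩], ?_, ?_⟩, by simp [hw], ?_⟩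
    · simpa [or_imp, forall_and] using ⟨hm_ne_one, hba⟩
    · -- the chain condition only sees the indices, which are those of `m ++ [⟨i, b⟩]`
      rw [← List.isChain_map Sigma.fst] at hchain ⊢
      simpa using hchain
    · rw [hprod]
      simp [Word.prod]

theorem Word.exists_isConj_of_isOfFinOrder_prod [Nonempty ι] (w : Word G)
    (hw : IsOfFinOrder w.prod) : ∃ (i : ι) (a : G i), IsConj (of a) w.prod := by
  induction hn : w.toList.length using Nat.strong_induction_on generalizing w with
  | _ n ih =>
  match hl : w.toList with
  | [] => exact ⟨Classical.arbitrary ι, 1, by simp [Word.prod, hl]⟩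
  | [⟨i, a⟩] =>
    refine ⟨i, a, ?_⟩
    simp only [Word.prod, hl, List.map_singleton, List.prod_singleton]
    exact IsConj.refl _
  | ⟨i, a⟩ :: y :: t =>
    obtain ⟨m, ⟨j, b⟩, hmb⟩ :=
      (List.eq_nil_or_concat (y :: t)).resolve_left (List.cons_ne_nil _ _)
    rw [hmb, List.concat_eq_append] at hl
    by_cases hji : j = i
    · subst hji
      obtain ⟨w', hlen, hconj⟩ := w.exists_length_lt_prod_eq_conj a b m hl
      have hw_conj : IsConj w'.prod w.prod :=
        isConj_iff.mpr ⟨of a, by rw [hconj]; group⟩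
      obtain ⟨k, c, hc⟩ := ih _ (hn ▸ hlen) w' (hw_conj.symm.isOfFinOrder hw) rfl
      exact ⟨k, c, hc.trans hw_conj⟩
    · exact absurd hw (w.not_isOfFinOrder_prod_of_head_fst_ne_getLast_fst
        (by rw [hl, ← List.cons_append, List.getLast?_concat]; simpa using Ne.symm hji))

theorem exists_isConj_of_isOfFinOrder [Nonempty ι] {g : CoprodI G} (hg : IsOfFinOrder g) :
    ∃ (i : ι) (a : G i), IsConj (of a) g := by
  classical
  rw [← Word.equiv.symm_apply_apply g] at hg ⊢
  exact Word.exists_isConj_of_isOfFinOrder_prod _ hg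

end Group

end Monoid.CoprodI

/-- Every torsion element of a free product `*_{i∈I} A_i` of a (nonempty) family of groups
is conjugate to an element of one of the factors. -/
theorem torsion_conjugate_into_factor
    {ι : Type*} [Nonempty ι] (A : ι → Type*) [∀ i, Group (A i)]
    (g : CoprodI A) (hg : IsOfFinOrder g) :
    ∃ (i : ι) (a : A i) (x : CoprodI A), g = x * CoprodI.of a * x⁻¹ := by
  obtain ⟨i, a, hconj⟩ := CoprodI.exists_isConj_of_isOfFinOrder hg
  obtain ⟨x, hx⟩ := isConj_iff.mp hconj
  exact ⟨i, a, x, hx.symm⟩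
end
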